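/- Let S be an RN module over ℝ with base (Ω, F, P), let E ∈ F̃ with P(E) > 0, and let x, y ∈ S be L⁰-independent on E. Then for every α ∈ L⁰(F,ℝ), ‖(cos α)·x + (sin α)·y‖ > 0 on E, where cos α, sin α ∈ L⁰(F,ℝ) denote the equivalence classes of ω ↦ cos(α⁰(ω)) and ω ↦ sin(α⁰(ω)) for a representative α⁰ of α. -/

import Mathlib

open MeasureTheory Filter Set

noncomputable section

namespace RNM

variable {Ω : Type*} [MeasurableSpace Ω]

/-- `L⁰(F, ℝ)`: equivalence classes of real random variables mod a.e. equality. -/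
abbrev L0 (μ : Measure Ω) : Type _ := Ω →ₘ[μ] ℝ

open Classical in
/-- The equivalence class of the indicator function of a (measurable) set. -/
noncomputable def ind (μ : Measure Ω) (A : Set Ω) : L0 μ :=
  if h : MeasurableSet A then
    AEEqFun.mk (A.indicator fun _ => (1 : ℝ)) (aestronglyMeasurable_const.indicator h)
  else 0

/-- The constant function, as an element of `L⁰`. -/
noncomputable def cst (μ : Measure Ω) (r : ℝ) : L0 μ := AEEqFun.const Ω r

/-- `A ⊂ B` modulo null sets. -/
def aeSub (μ : Measure Ω) (A B : Set Ω) : Prop := μ (A \ B) = 0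

/-- `A = B` modulo null sets. -/
def aeEqS (μ : Measure Ω) (A B : Set Ω) : Prop := μ ((A \ B) ∪ (B \ A)) = 0

variable {μ : Measure Ω} {S : Type*} [AddCommGroup S]

/-- The axioms of a random normed module over ℝ with base `(Ω, F, μ)`: `S` is a left module
over the algebra `L⁰(F,ℝ)` (with module multiplication `sm`) and `nrm` is an `L⁰`-norm. -/
structure IsRNModule (μ : Measure Ω) (sm : L0 μ → S → S) (nrm : S → L0 μ) : Prop where
  smul_add : ∀ ξ x y, sm ξ (x + y) = sm ξ x + sm ξ y
  add_smul : ∀ ξ η x, sm (ξ + η) x = sm ξ x + sm η x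
  mul_smul : ∀ ξ η x, sm (ξ * η) x = sm ξ (sm η x)
  one_smul : ∀ x, sm 1 x = x
  nrm_nonneg : ∀ x, 0 ≤ nrm x
  nrm_smul : ∀ ξ x, nrm (sm ξ x) = |ξ| * nrm x
  nrm_add : ∀ x y, nrm (x + y) ≤ nrm x + nrm y
  nrm_eq_zero : ∀ x, nrm x = 0 → x = 0

/-- `x` and `y` are `L⁰`-independent on `F`. -/
def Indep (sm : L0 μ → S → S) (x y : S) (F : Set Ω) : Prop :=
  ∀ ξ η : L0 μ, sm (ξ * ind μ F) x + sm (η * ind μ F) y = 0 →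
    ξ * ind μ F = 0 ∧ η * ind μ F = 0

/-- `Rank_D(S) ≥ 2`. -/
def RankGe2 (sm : L0 μ → S → S) (D : Set Ω) : Prop := ∃ x y : S, Indep sm x y D

/-- `A_x = [‖x‖ > 0]`. -/
def Aset (nrm : S → L0 μ) (x : S) : Set Ω := {ω | 0 < (nrm x) ω}

/-- `A_{xy} = A_x ∩ A_y`. -/
def Axy (nrm : S → L0 μ) (x y : S) : Set Ω := Aset nrm x ∩ Aset nrm y

/-- `B_{xy} = A_{xy} ∩ A_{x-y}`. -/
def Bxy (nrm : S → L0 μ) (x y : S) : Set Ω := Axy nrm x y ∩ Aset nrm (x - y)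

/-- `H` is (a representative of) the support `H(S) = [⋁{‖x‖ : x ∈ S} > 0]`. -/
def IsSupport (nrm : S → L0 μ) (H : Set Ω) : Prop :=
  MeasurableSet H ∧ (∀ x : S, aeSub μ (Aset nrm x) H) ∧
    ∀ B : Set Ω, MeasurableSet B → aeSub μ B H → 0 < μ B →
      ∃ x : S, 0 < μ (B ∩ Aset nrm x)

/-- A sequence in `S` is Cauchy for the topology of convergence in probability. -/
def CauchyInProb (μ : Measure Ω) (nrm : S → L0 μ) (u : ℕ → S) : Prop :=
  ∀ ε : ℝ, 0 < ε →
    Tendsto (fun p : ℕ × ℕ => μ {ω | ε ≤ |(nrm (u p.1 - u p.2)) ω|}) atTop (nhds 0)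

/-- `u n → x` in probability (i.e. `‖u n - x‖ → 0` in probability). -/
def TendstoInProb (μ : Measure Ω) (nrm : S → L0 μ) (u : ℕ → S) (x : S) : Prop :=
  ∀ ε : ℝ, 0 < ε →
    Tendsto (fun n => μ {ω | ε ≤ |(nrm (u n - x)) ω|}) atTop (nhds 0)

/-- Completeness of a random normed module. -/
def CompleteRN (μ : Measure Ω) (nrm : S → L0 μ) : Prop :=
  ∀ u : ℕ → S, CauchyInProb μ nrm u → ∃ x : S, TendstoInProb μ nrm u x

/-- The random unit sphere `S(1)`. -/
def sphere (nrm : S → L0 μ) : Set S :=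
  {x | ∃ A : Set Ω, MeasurableSet A ∧ 0 < μ A ∧ nrm x = ind μ A}

/-- The random closed unit ball `U(1)`. -/
def ball (nrm : S → L0 μ) : Set S := {x | nrm x ≤ 1}

/-- `ε` is an admissible random convexity parameter on `D`: `ε ≥ 0` and `0 < ε ≤ 2` on `D`. -/
def Admissible (μ : Measure Ω) (D : Set Ω) (ε : L0 μ) : Prop :=
  0 ≤ ε ∧ ∀ᵐ ω ∂μ, ω ∈ D → 0 < ε ω ∧ ε ω ≤ 2

/-- midpoint `(x+y)/2`. -/
def mid (μ : Measure Ω) (sm : L0 μ → S → S) (x y : S) : S := sm (cst μ (1/2)) (x + y)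

/-- The set whose infimum (in the a.s. order of `L⁰`) is the modulus of random
convexity `δ_D(ε)`. -/
def modSet (μ : Measure Ω) (sm : L0 μ → S → S) (nrm : S → L0 μ) (D : Set Ω) (ε : L0 μ) :
    Set (L0 μ) :=
  {z | ∃ x ∈ sphere nrm, ∃ y ∈ sphere nrm, aeSub μ D (Bxy nrm x y) ∧
    ε * ind μ D ≤ ind μ D * nrm (x - y) ∧
    z = ind μ D - ind μ D * nrm (mid μ sm x y)}

/-- `S` is random uniformly convex: `δ_{H(S)}(ε) > 0` on `H(S)` for every admissible `ε`. -/
def RandomUniformlyConvex (μ : Measure Ω) (sm : L0 μ → S → S) (nrm : S → L0 μ)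
    (H : Set Ω) : Prop :=
  ∀ ε : L0 μ, Admissible μ H ε → ∀ d : L0 μ, IsGLB (modSet μ sm nrm H ε) d →
    ∀ᵐ ω ∂μ, ω ∈ H → 0 < d ω

/-- `G` is (a representative of) `G(S)`. -/
def IsGSet (μ : Measure Ω) (sm : L0 μ → S → S) (H G : Set Ω) : Prop :=
  MeasurableSet G ∧ aeSub μ G H ∧ 0 < μ G ∧ RankGe2 sm G ∧
    ∀ D : Set Ω, MeasurableSet D → aeSub μ D (H \ G) → 0 < μ D → ¬ RankGe2 sm D


/-- `cos α ∈ L⁰(F,ℝ)`. -/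
def cosL (μ : Measure Ω) (α : L0 μ) : L0 μ := AEEqFun.comp Real.cos Real.continuous_cos α

/-- `sin α ∈ L⁰(F,ℝ)`. -/
def sinL (μ : Measure Ω) (α : L0 μ) : L0 μ := AEEqFun.comp Real.sin Real.continuous_sin α


lemma coeFn_ind {A : Set Ω} (hA : MeasurableSet A) :
    ⇑(ind μ A) =ᵐ[μ] A.indicator fun _ => (1 : ℝ) := by
  rw [ind, dif_pos hA]
  exact AEEqFun.coeFn_mk _ _

lemma abs_ind {A : Set Ω} (hA : MeasurableSet A) : |ind μ A| = ind μ A := by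
  apply AEEqFun.ext
  filter_upwards [AEEqFun.coeFn_abs (ind μ A), coeFn_ind hA] with ω habs hind
  by_cases hω : ω ∈ A <;> simp [habs, hind, hω]

lemma ind_mul_eq_zero_iff {A : Set Ω} (hA : MeasurableSet A) {ξ : L0 μ} :
    ind μ A * ξ = 0 ↔ ∀ᵐ ω ∂μ, ω ∈ A → ξ ω = 0 := by
  rw [AEEqFun.ext_iff]
  constructor
  · intro h
    filter_upwards [h, AEEqFun.coeFn_mul (ind μ A) ξ, coeFn_ind hA,
      AEEqFun.coeFn_zero (μ := μ) (β := ℝ)] with ω hω hmul hind hzero hωA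
    simpa [hmul, hind, hzero, hωA] using hω
  · intro h
    filter_upwards [h, AEEqFun.coeFn_mul (ind μ A) ξ, coeFn_ind hA,
      AEEqFun.coeFn_zero (μ := μ) (β := ℝ)] with ω hω hmul hind hzero
    by_cases hωA : ω ∈ A <;> simp [hmul, hind, hzero, hωA, hω]

lemma ind_mul_ind_of_subset {A B : Set Ω} (hA : MeasurableSet A) (hB : MeasurableSet B)
    (hAB : A ⊆ B) : ind μ A * ind μ B = ind μ A := by
  apply AEEqFun.ext
  filter_upwards [AEEqFun.coeFn_mul (ind μ A) (ind μ B), coeFn_ind hA, coeFn_ind hB]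
    with ω hmul hindA hindB
  by_cases hω : ω ∈ A
  · simp [hmul, hindA, hindB, hω, hAB hω]
  · simp [hmul, hindA, hω]

lemma coeFn_cosL (α : L0 μ) : ⇑(cosL μ α) =ᵐ[μ] fun ω => Real.cos (α ω) :=
  AEEqFun.coeFn_comp _ _ _

lemma coeFn_sinL (α : L0 μ) : ⇑(sinL μ α) =ᵐ[μ] fun ω => Real.sin (α ω) :=
  AEEqFun.coeFn_comp _ _ _

variable {sm : L0 μ → S → S} {nrm : S → L0 μ}

lemma Indep.mono {x y : S} {A B : Set Ω} (h : Indep sm x y B) (hA : MeasurableSet A)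
    (hB : MeasurableSet B) (hAB : A ⊆ B) : Indep sm x y A := by
  intro ξ η hξη
  simpa only [mul_assoc, ind_mul_ind_of_subset hA hB hAB] using h (ξ * ind μ A) (η * ind μ A)
    (by simpa only [mul_assoc, ind_mul_ind_of_subset hA hB hAB] using hξη)

namespace IsRNModule

variable (hRN : IsRNModule μ sm nrm)
include hRN

lemma ae_nrm_nonneg (z : S) : ∀ᵐ ω ∂μ, 0 ≤ nrm z ω := by
  filter_upwards [AEEqFun.coeFn_le.mpr (hRN.nrm_nonneg z),
    AEEqFun.coeFn_zero (μ := μ) (β := ℝ)] with ω hle hzero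
  simpa [hzero] using hle

lemma smul_ind_eq_zero {A : Set Ω} (hA : MeasurableSet A) {z : S}
    (hz : ∀ᵐ ω ∂μ, ω ∈ A → nrm z ω = 0) : sm (ind μ A) z = 0 :=
  hRN.nrm_eq_zero _ <| by rw [hRN.nrm_smul, abs_ind hA, ind_mul_eq_zero_iff hA]; exact hz

lemma smul_mul_ind_add_smul_mul_ind (ξ η : L0 μ) (A : Set Ω) (x y : S) :
    sm (ξ * ind μ A) x + sm (η * ind μ A) y = sm (ind μ A) (sm ξ x + sm η y) := by
  rw [hRN.smul_add, mul_comm ξ, mul_comm η, hRN.mul_smul, hRN.mul_smul]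

end IsRNModule

/-- Apply independence on the part of `E` where `‖ξ x + η y‖` vanishes. -/
theorem Indep.nrm_smul_add_smul_pos (hRN : IsRNModule μ sm nrm) {x y : S} {E : Set Ω}
    (hE : MeasurableSet E) (hind : Indep sm x y E) (ξ η : L0 μ) :
    ∀ᵐ ω ∂μ, ω ∈ E → (ξ ω ≠ 0 ∨ η ω ≠ 0) → 0 < nrm (sm ξ x + sm η y) ω := by
  set z := sm ξ x + sm η y
  set A : Set Ω := E ∩ {ω | nrm z ω ≤ 0}
  have hA : MeasurableSet A := hE.inter ((nrm z).measurable measurableSet_Iic)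
  have hzA : sm (ind μ A) z = 0 := hRN.smul_ind_eq_zero hA <| by
    filter_upwards [hRN.ae_nrm_nonneg z] with ω hnonneg hω using le_antisymm hω.2 hnonneg
  obtain ⟨hξ, hη⟩ := hind.mono hA hE inter_subset_left ξ η <| by
    rw [hRN.smul_mul_ind_add_smul_mul_ind, hzA]
  rw [mul_comm, ind_mul_eq_zero_iff hA] at hξ hη
  filter_upwards [hξ, hη] with ω hξω hηω hωE hne
  by_contra! hle
  have hωA : ω ∈ A := ⟨hωE, hle⟩
  rcases hne with hne | hne
  exacts [hne (hξω hωA), hne (hηω hωA)]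

theorem norm_trig_combination_pos_general {Ω : Type*} [MeasurableSpace Ω] (μ : Measure Ω)
    {S : Type*} [AddCommGroup S]
    (sm : L0 μ → S → S) (nrm : S → L0 μ) (hRN : IsRNModule μ sm nrm)
    (E : Set Ω) (hEm : MeasurableSet E)
    (x y : S) (hind : Indep sm x y E) :
    ∀ α : L0 μ, ∀ᵐ ω ∂μ, ω ∈ E → 0 < (nrm (sm (cosL μ α) x + sm (sinL μ α) y)) ω := by
  intro α
  filter_upwards [hind.nrm_smul_add_smul_pos hRN hEm (cosL μ α) (sinL μ α), coeFn_cosL α,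
    coeFn_sinL α] with ω hpos hcos hsin hωE
  refine hpos hωE ?_
  rw [hcos, hsin, ← not_and_or]
  rintro ⟨hc, hs⟩
  simpa [hc, hs] using Real.sin_sq_add_cos_sq (α ω)

/-- If `x` and `y` are `L⁰`-independent on `E`, then for every `α ∈ L⁰(F,ℝ)`,
`‖(cos α) x + (sin α) y‖ > 0` on `E`. -/
theorem norm_trig_combination_pos {Ω : Type*} [MeasurableSpace Ω] (μ : Measure Ω)
    [IsProbabilityMeasure μ] {S : Type*} [AddCommGroup S]
    (sm : L0 μ → S → S) (nrm : S → L0 μ) (hRN : IsRNModule μ sm nrm)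
    (E : Set Ω) (hEm : MeasurableSet E) (hEpos : 0 < μ E)
    (x y : S) (hind : Indep sm x y E) :
    ∀ α : L0 μ, ∀ᵐ ω ∂μ, ω ∈ E → 0 < (nrm (sm (cosL μ α) x + sm (sinL μ α) y)) ω :=
  norm_trig_combination_pos_general μ sm nrm hRN E hEm x y hind

end RNM
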